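/- arXiv:1707.04846 — 4 statements merged into one kernel-verified Lean document; each statement's English description precedes it below -/
import Mathlib

section
/- On a 4-dimensional Riemannian manifold, the divergence-type quantity ∇_i R_{i'j'kl} (sum over i, with (i',j') the dual pair of (i,j)) vanishes identically: ∇_i R_{i'j'kl} = 0 for all j,k,l. -/
open Finset

/-- For distinct `i j`, `dualPair i j = (i','j')` with `(i,j,i','j')` an even
permutation of `(0,1,2,3)`; junk value `(i,i)` on the diagonal. -/
def dualPair : Fin 4 → Fin 4 → Fin 4 × Fin 4 :=
  ![![(0,0),(2,3),(3,1),(1,2)],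
    ![(3,2),(1,1),(0,3),(2,0)],
    ![(1,3),(3,0),(2,2),(0,1)],
    ![(2,1),(0,2),(1,0),(3,3)]]

/-- on a 4-dimensional Riemannian manifold the quantity
`∇_i R_{i'j'kl}` (sum over `i`) vanishes.  Here `DR m i j k l = ∇_m R_{ijkl}` in an
orthonormal frame; the hypotheses are the inherited algebraic symmetries, the second
Bianchi identity, and the (differentiated) first-Bianchi consequence `∇_m R_{i'j'ik}=0`. -/
theorem derivative_dual_curvature_vanishes
    (DR : Fin 4 → Fin 4 → Fin 4 → Fin 4 → Fin 4 → ℝ)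
    (hA1 : ∀ m i j k l, DR m i j k l = - DR m j i k l)
    (hA2 : ∀ m i j k l, DR m i j k l = - DR m i j l k)
    (hPair : ∀ m i j k l, DR m i j k l = DR m k l i j)
    (hBianchi2 : ∀ a b m k l, DR m a b k l + DR k a b l m + DR l a b m k = 0)
    (hD0 : ∀ m j k, ∑ i : Fin 4, DR m (dualPair i j).1 (dualPair i j).2 i k = 0) :
    ∀ j k l : Fin 4, ∑ i : Fin 4, DR i (dualPair i j).1 (dualPair i j).2 k l = 0 := by
  intro j k l
  fin_cases j <;>
    simp only [dualPair, Fin.sum_univ_four, Fin.isValue, show (⟨0,by norm_num⟩ : Fin 4) = 0 from rfl,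
      show (⟨1,by norm_num⟩ : Fin 4) = 1 from rfl, show (⟨2,by norm_num⟩ : Fin 4) = 2 from rfl,
      show (⟨3,by norm_num⟩ : Fin 4) = 3 from rfl, Matrix.cons_val_zero,
      Matrix.cons_val_one, Matrix.head_cons, Matrix.cons_val_two, Matrix.tail_cons,
      Matrix.cons_val_three]
  · linarith [hA1 0 0 0 k l, hPair 1 3 2 k l, hPair 2 1 3 k l, hPair 3 2 1 k l,
      hBianchi2 k l 1 3 2]
  · linarith [hA1 1 1 1 k l, hPair 0 2 3 k l, hPair 2 3 0 k l, hPair 3 0 2 k l,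
      hBianchi2 k l 0 2 3]
  · linarith [hA1 2 2 2 k l, hPair 0 3 1 k l, hPair 1 0 3 k l, hPair 3 1 0 k l,
      hBianchi2 k l 0 3 1]
  · linarith [hA1 3 3 3 k l, hPair 0 1 2 k l, hPair 1 2 0 k l, hPair 2 0 1 k l,
      hBianchi2 k l 0 1 2]
end

section
/- On a 4-dimensional Riemannian manifold, if div Rm^± = 0, then div W^± = 0, i.e., vanishing of the (anti-)self-dual divergence of the full curvature tensor implies vanishing of the (anti-)self-dual divergence of the Weyl tensor. -/
open Finset

noncomputable section

/-- Kronecker delta (the metric in an orthonormal frame). -/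
def kd (i j : Fin 4) : ℝ := if i = j then 1 else 0

/-- on a 4-dimensional Riemannian manifold, `div Rm^± = 0` implies
`div W^± = 0`.  Here `DR m i j k l = ∇_m R_{ijkl}`, `DRic m i j = ∇_m R_{ij}`,
`DScal m = ∇_m R`, and `divW i j k = ∇_l W_{ijkl}` in an orthonormal frame.
`hCotton` is `∇_l W_{ijkl} = -(1/2) C_{ijk}` with `C` the 4-dimensional Cotton tensor,
`hCB` the contracted second Bianchi identity, `hTrace`/`hDual` the trace identities
`∇_l R_{ijil} = (1/2)∇_j R` and `∇_l R_{i'j'il} = 0` (sums over `i, l`). -/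
theorem divRmPM_zero_implies_divWeylPM_zero
    (DR : Fin 4 → Fin 4 → Fin 4 → Fin 4 → Fin 4 → ℝ)
    (DRic : Fin 4 → Fin 4 → Fin 4 → ℝ)
    (DScal : Fin 4 → ℝ)
    (divW : Fin 4 → Fin 4 → Fin 4 → ℝ)
    (ε : ℝ) (hε : ε = 1 ∨ ε = -1)
    (hCotton : ∀ i j k, divW i j k
      = -(1/2) * (DRic i j k - DRic j i k - (1/6) * (kd j k * DScal i - kd i k * DScal j)))
    (hCB : ∀ i j k, ∑ l : Fin 4, DR l i j k l = DRic i j k - DRic j i k)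
    (hTrace : ∀ j : Fin 4, ∑ i : Fin 4, ∑ l : Fin 4, DR l i j i l = (1/2) * DScal j)
    (hDual : ∀ j : Fin 4,
      ∑ i : Fin 4, ∑ l : Fin 4, DR l (dualPair i j).1 (dualPair i j).2 i l = 0)
    (hdiv : ∀ i j k : Fin 4,
      (∑ l : Fin 4, DR l i j k l)
        + ε * ∑ l : Fin 4, DR l (dualPair i j).1 (dualPair i j).2 k l = 0) :
    ∀ i j k : Fin 4, divW i j k + ε * divW (dualPair i j).1 (dualPair i j).2 k = 0 := by
  have hS : ∀ j, DScal j = 0 := by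
    intro j
    have h1 : ∑ i : Fin 4, ((∑ l : Fin 4, DR l i j i l)
        + ε * ∑ l : Fin 4, DR l (dualPair i j).1 (dualPair i j).2 i l) = 0 :=
      Finset.sum_eq_zero (fun i _ => hdiv i j i)
    rw [Finset.sum_add_distrib, ← Finset.mul_sum, hTrace j, hDual j] at h1
    linarith
  intro i j k
  rw [hCotton, hCotton, ← hCB, ← hCB]
  simp only [hS, mul_zero]
  linear_combination (-(1/2) : ℝ) * hdiv i j k
end
end

section
/- On a 4-dimensional Riemannian manifold, the pointwise inequality |div Rm^±|² ≥ (1/48)|∇R|² holds, where R is the scalar curvature. -/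
open Finset

noncomputable section

/-- `(div Rm^±)_{ijk} = (1/4)(∇_l R_{ijkl} ± ∇_l R_{i'j'kl})`, where
`DR m i j k l = ∇_m R_{ijkl}` and `ε = ±1`. -/
def divRmPM (DR : Fin 4 → Fin 4 → Fin 4 → Fin 4 → Fin 4 → ℝ) (ε : ℝ) (i j k : Fin 4) : ℝ :=
  (1/4) * ((∑ l : Fin 4, DR l i j k l)
    + ε * ∑ l : Fin 4, DR l (dualPair i j).1 (dualPair i j).2 k l)

private lemma aux_ineq (e x y z D : ℝ) (h2 : e*e = 1) (h : x + e*y + e*z = (1/8)*D) :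
    (1/48)*D^2 ≤ 4*(x^2+y^2+z^2) := by
  have hD : D = 8*(x + e*y + e*z) := by linarith
  rw [hD]
  have k1 : (e*e)*(y-z)^2 = (y-z)^2 := by rw [h2, one_mul]
  have k2 : (e*e)*y^2 = y^2 := by rw [h2, one_mul]
  have k3 : (e*e)*z^2 = z^2 := by rw [h2, one_mul]
  nlinarith [k1, k2, k3, sq_nonneg (x - e*y), sq_nonneg (x - e*z), sq_nonneg (y - z)]


/-- on a 4-dimensional Riemannian manifold the pointwise inequality
`|div Rm^±|² ≥ (1/48)|∇R|²` holds.  Here `DR m i j k l = ∇_m R_{ijkl}` and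
`DScal m = ∇_m R` in an orthonormal frame; the hypotheses are the inherited curvature
symmetries and the trace identities `∇_l R_{ijil} = (1/2)∇_j R`, `∇_l R_{i'j'il} = 0`
(sums over `i, l`). -/
theorem divRmPM_sq_ge_gradScal_sq
    (DR : Fin 4 → Fin 4 → Fin 4 → Fin 4 → Fin 4 → ℝ)
    (DScal : Fin 4 → ℝ) (ε : ℝ) (hε : ε = 1 ∨ ε = -1)
    (hA1 : ∀ m i j k l, DR m i j k l = - DR m j i k l)
    (hA2 : ∀ m i j k l, DR m i j k l = - DR m i j l k)
    (hPair : ∀ m i j k l, DR m i j k l = DR m k l i j)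
    (hTrace : ∀ j : Fin 4, ∑ i : Fin 4, ∑ l : Fin 4, DR l i j i l = (1/2) * DScal j)
    (hDual : ∀ j : Fin 4,
      ∑ i : Fin 4, ∑ l : Fin 4, DR l (dualPair i j).1 (dualPair i j).2 i l = 0) :
    (1/48) * ∑ m : Fin 4, (DScal m)^2
      ≤ ∑ i : Fin 4, ∑ j : Fin 4, ∑ k : Fin 4, (divRmPM DR ε i j k)^2 := by
  have e2 : ε * ε = 1 := by rcases hε with rfl | rfl <;> norm_num
  -- antisymmetry in (i,j)
  have hanti : ∀ i j k, divRmPM DR ε j i k = - divRmPM DR ε i j k := by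
    intro i j k
    have hd : dualPair j i = ((dualPair i j).2, (dualPair i j).1) := by
      revert i j; decide
    simp only [divRmPM, hd]
    have h1 : (∑ l, DR l j i k l) = -∑ l, DR l i j k l := by
      rw [← Finset.sum_neg_distrib]
      exact Finset.sum_congr rfl fun l _ => hA1 l j i k l
    have h2 : (∑ l, DR l ((dualPair i j).2, (dualPair i j).1).1
          ((dualPair i j).2, (dualPair i j).1).2 k l)
        = -∑ l, DR l (dualPair i j).1 (dualPair i j).2 k l := by
      rw [← Finset.sum_neg_distrib]
      exact Finset.sum_congr rfl fun l _ => hA1 l (dualPair i j).2 (dualPair i j).1 k l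
    rw [h1, h2]; ring
  -- self/anti-self duality
  have hdual2 : ∀ i j k, divRmPM DR ε (dualPair i j).1 (dualPair i j).2 k
      = ε * divRmPM DR ε i j k := by
    intro i j k
    have hd : dualPair (dualPair i j).1 (dualPair i j).2 = (i, j) := by
      revert i j; decide
    simp only [divRmPM, hd]
    linear_combination (-(1/4) * ∑ l, DR l (dualPair i j).1 (dualPair i j).2 k l) * e2
  -- trace identity
  have htr : ∀ j, (∑ i : Fin 4, divRmPM DR ε i j i) = (1/8) * DScal j := by
    intro j
    have ht := hTrace j
    have hd := hDual j
    simp only [Fin.sum_univ_four] at ht hd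
    simp only [divRmPM, Fin.sum_univ_four]
    linear_combination (1/4) * ht + (ε/4) * hd
  -- entries
  have hz : ∀ i k, divRmPM DR ε i i k = 0 := fun i k => by
    have := hanti i i k; linarith
  have h10 : ∀ k, divRmPM DR ε 1 0 k = - divRmPM DR ε 0 1 k := fun k => hanti 0 1 k
  have h20 : ∀ k, divRmPM DR ε 2 0 k = - divRmPM DR ε 0 2 k := fun k => hanti 0 2 k
  have h30 : ∀ k, divRmPM DR ε 3 0 k = - divRmPM DR ε 0 3 k := fun k => hanti 0 3 k
  have h23 : ∀ k, divRmPM DR ε 2 3 k = ε * divRmPM DR ε 0 1 k := fun k => hdual2 0 1 k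
  have h31 : ∀ k, divRmPM DR ε 3 1 k = ε * divRmPM DR ε 0 2 k := fun k => hdual2 0 2 k
  have h12 : ∀ k, divRmPM DR ε 1 2 k = ε * divRmPM DR ε 0 3 k := fun k => hdual2 0 3 k
  have h32 : ∀ k, divRmPM DR ε 3 2 k = -(ε * divRmPM DR ε 0 1 k) := fun k => by
    rw [← h23 k]; exact hanti 2 3 k
  have h13 : ∀ k, divRmPM DR ε 1 3 k = -(ε * divRmPM DR ε 0 2 k) := fun k => by
    rw [← h31 k]; exact hanti 3 1 k
  have h21 : ∀ k, divRmPM DR ε 2 1 k = -(ε * divRmPM DR ε 0 3 k) := fun k => by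
    rw [← h12 k]; exact hanti 1 2 k
  have ht0 := htr 0
  have ht1 := htr 1
  have ht2 := htr 2
  have ht3 := htr 3
  simp only [Fin.sum_univ_four, hz, h10, h20, h30, h23, h31, h12, h32, h13, h21]
    at ht0 ht1 ht2 ht3 ⊢
  set a0 := divRmPM DR ε 0 1 0 with ha0
  set a1 := divRmPM DR ε 0 1 1 with ha1
  set a2 := divRmPM DR ε 0 1 2 with ha2
  set a3 := divRmPM DR ε 0 1 3 with ha3
  set b0 := divRmPM DR ε 0 2 0 with hb0
  set b1 := divRmPM DR ε 0 2 1 with hb1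
  set b2 := divRmPM DR ε 0 2 2 with hb2
  set b3 := divRmPM DR ε 0 2 3 with hb3
  set c0 := divRmPM DR ε 0 3 0 with hc0
  set c1 := divRmPM DR ε 0 3 1 with hc1
  set c2 := divRmPM DR ε 0 3 2 with hc2
  set c3 := divRmPM DR ε 0 3 3 with hc3
  have epow : ε^2 = 1 := by rw [sq]; exact e2
  have E : ∀ x : ℝ, (ε*x)^2 = x^2 := fun x => by rw [mul_pow, epow, one_mul]
  have L0 := aux_ineq 1 (-a1) (-b2) (-c3) (DScal 0) (by norm_num) (by linarith [ht0])
  have L1 := aux_ineq ε a0 (-c2) b3 (DScal 1) e2 (by linarith [ht1])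
  have L2 := aux_ineq ε b0 c1 (-a3) (DScal 2) e2 (by linarith [ht2])
  have L3 := aux_ineq ε c0 (-b1) a2 (DScal 3) e2 (by linarith [ht3])
  simp only [neg_sq, E]
  linarith only [L0, L1, L2, L3]
end
end

section
/- On a 4-dimensional gradient Ricci soliton, at every point where ∇f ≠ 0 with e_1 = ∇f/|∇f| extended to an orthonormal frame {e_1,e_2,e_3,e_4}, one has R_{i'j'kl}∇_i R_{jl}∇_k f = 2(R_{121l}R_{341l} + R_{131l}R_{421l} + R_{141l}R_{231l})|∇f|², summing over l and repeated indices. -/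
open Finset

noncomputable section

set_option maxRecDepth 8000 in
set_option maxHeartbeats 2000000 in
/-- on a 4-dimensional gradient Ricci soliton, at a point where `∇f ≠ 0`,
in an orthonormal frame with `e₁ = ∇f/|∇f|` (so `df = c·e₁` with `c = |∇f| > 0`),
`R_{i'j'kl} ∇_i R_{jl} ∇_k f = 2(R_{121l}R_{341l} + R_{131l}R_{421l} + R_{141l}R_{231l})|∇f|²`.
Here `DRic m i j = ∇_m R_{ij}`; `hComm` is the soliton identity (3.12). -/
theorem soliton_dual_curvature_DRic_gradf (c : ℝ) (hc : 0 < c)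
    (R : Fin 4 → Fin 4 → Fin 4 → Fin 4 → ℝ)
    (DRic : Fin 4 → Fin 4 → Fin 4 → ℝ) (df : Fin 4 → ℝ)
    (hdf : ∀ i, df i = if i = 0 then c else 0)
    (hA1 : ∀ i j k l, R i j k l = - R j i k l)
    (hA2 : ∀ i j k l, R i j k l = - R i j l k)
    (hPair : ∀ i j k l, R i j k l = R k l i j)
    (hComm : ∀ i j k, DRic j i k - DRic i j k = ∑ l : Fin 4, R i j k l * df l) :
    (∑ i : Fin 4, ∑ j : Fin 4, ∑ k : Fin 4, ∑ l : Fin 4,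
        R (dualPair i j).1 (dualPair i j).2 k l * DRic i j l * df k)
      = 2 * (∑ l : Fin 4, (R 0 1 0 l * R 2 3 0 l + R 0 2 0 l * R 3 1 0 l
          + R 0 3 0 l * R 1 2 0 l)) * c^2 := by

  have hdiag : ∀ i k l, R i i k l = 0 := fun i k l => by have := hA1 i i k l; linarith
  have hC : ∀ i j k, DRic j i k = DRic i j k + R i j k 0 * c := by
    intro i j k
    have h := hComm i j k
    simp [Fin.sum_univ_four, hdf] at h
    linarith
  have hC10 : ∀ k, DRic 1 0 k = DRic 0 1 k + R 0 1 k 0 * c := fun k => hC 0 1 k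
  have hC20 : ∀ k, DRic 2 0 k = DRic 0 2 k + R 0 2 k 0 * c := fun k => hC 0 2 k
  have hC21 : ∀ k, DRic 2 1 k = DRic 1 2 k + R 1 2 k 0 * c := fun k => hC 1 2 k
  have hC30 : ∀ k, DRic 3 0 k = DRic 0 3 k + R 0 3 k 0 * c := fun k => hC 0 3 k
  have hC31 : ∀ k, DRic 3 1 k = DRic 1 3 k + R 1 3 k 0 * c := fun k => hC 1 3 k
  have hC32 : ∀ k, DRic 3 2 k = DRic 2 3 k + R 2 3 k 0 * c := fun k => hC 2 3 k
  have h10 : ∀ k l, R 1 0 k l = - R 0 1 k l := fun k l => hA1 1 0 k l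
  have h20 : ∀ k l, R 2 0 k l = - R 0 2 k l := fun k l => hA1 2 0 k l
  have h21 : ∀ k l, R 2 1 k l = - R 1 2 k l := fun k l => hA1 2 1 k l
  have h30 : ∀ k l, R 3 0 k l = - R 0 3 k l := fun k l => hA1 3 0 k l
  have h31 : ∀ k l, R 3 1 k l = - R 1 3 k l := fun k l => hA1 3 1 k l
  have h32 : ∀ k l, R 3 2 k l = - R 2 3 k l := fun k l => hA1 3 2 k l
  have h00 : ∀ i j, R i j 0 0 = 0 := fun i j => by have := hA2 i j 0 0; linarith
  have hs1 : ∀ i j, R i j 1 0 = - R i j 0 1 := fun i j => hA2 i j 1 0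
  have hs2 : ∀ i j, R i j 2 0 = - R i j 0 2 := fun i j => hA2 i j 2 0
  have hs3 : ∀ i j, R i j 3 0 = - R i j 0 3 := fun i j => hA2 i j 3 0
  simp only [Fin.sum_univ_four, hdf, dualPair, Matrix.cons_val]
  norm_num [hC10, hC20, hC21, hC30, hC31, hC32, hdiag, h10, h20, h21, h30, h31, h32, h00, hs1, hs2, hs3]
  simp only [show ((2:Fin 4) = 0) ↔ False from by decide,
    show ((3:Fin 4) = 0) ↔ False from by decide, if_false, add_zero, zero_add]
  ring
end
end
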